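/- arXiv:1808.02838 — 3 statements merged into one kernel-verified Lean document; each statement's English description precedes it below -/
import Mathlib

section
/- Theorem 1: Let B ≥ 1, λ > 0, and let r : Fin B → ℝ be any vector of strictly positive rates with ∑_i r i = N (the batch assignment: batch i is hosted by r i workers). Let μ_r be the product measure on (Fin B → ℝ) whose i-th factor is the exponential distribution with rate λ · r i, and define T(r) = ∫ (sup_i x i) dμ_r(x). Then T(r) ≥ T(c), where c is the balanced assignment with every entry equal to N/B; that is, among all assignments of N workers to B non-overlapping batches, the balanced assignment achieves the minimum expected overall service time. -/
open Finset MeasureTheory ProbabilityTheory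

/-!
The maximum `M` of independent exponential variables with rates `ρ i` has distribution function
`P(M ≤ t) = ∏ i, (1 - exp (-(ρ i * t)))`, and `E[M] = ∫_{t > 0} P(M > t) dt`. For each fixed
`t > 0`, AM-GM followed by Jensen's inequality for `exp` shows that this product is largest when all
the rates equal their mean, so the balanced assignment has the pointwise smallest tail and hence the
smallest expectation. Since a non-integrable function has Bochner integral `0`, the comparison also
needs `E[M] < ∞`, which follows from the union bound `P(M > t) ≤ ∑ i, exp (-(ρ i * t))`.
-/

open Real Set

lemma prod_le_mean_pow {ι : Type*} [Fintype ι] [Nonempty ι] {z : ι → ℝ} (hz : ∀ i, 0 ≤ z i) :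
    ∏ i, z i ≤ ((∑ i, z i) / Fintype.card ι) ^ Fintype.card ι := by
  set n := Fintype.card ι
  have hn : (n : ℝ) ≠ 0 := Nat.cast_ne_zero.2 Fintype.card_ne_zero
  have amgm := geom_mean_le_arith_mean_weighted univ (fun _ => (n : ℝ)⁻¹) z
    (fun _ _ => by positivity) (by simp [n, hn]) (fun i _ => hz i)
  rw [Real.finsetProd_rpow univ z (fun i _ => hz i), ← mul_sum, inv_mul_eq_div] at amgm
  have hprod : 0 ≤ ∏ i, z i := prod_nonneg fun i _ => hz i
  calc ∏ i, z i = ((∏ i, z i) ^ (n : ℝ)⁻¹) ^ n :=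
        (rpow_inv_natCast_pow hprod Fintype.card_ne_zero).symm
    _ ≤ _ := pow_le_pow_left₀ (rpow_nonneg hprod _) amgm n

lemma exp_mean_le_mean_exp {ι : Type*} [Fintype ι] [Nonempty ι] (x : ι → ℝ) :
    exp ((∑ i, x i) / Fintype.card ι) ≤ (∑ i, exp (x i)) / Fintype.card ι := by
  have hn : (Fintype.card ι : ℝ) ≠ 0 := Nat.cast_ne_zero.2 Fintype.card_ne_zero
  have jensen := convexOn_exp.map_sum_le (t := univ) (w := fun _ => (Fintype.card ι : ℝ)⁻¹)
    (p := x) (fun _ _ => by positivity) (by simp [hn]) (fun i _ => mem_univ _)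
  simp only [smul_eq_mul] at jensen
  rwa [← mul_sum, ← mul_sum, inv_mul_eq_div, inv_mul_eq_div] at jensen

lemma one_sub_exp_neg_nonneg {x : ℝ} (hx : 0 ≤ x) : 0 ≤ 1 - exp (-x) :=
  sub_nonneg.2 (exp_le_one_iff.2 (neg_nonpos.2 hx))

lemma prod_one_sub_exp_neg_le {ι : Type*} [Fintype ι] [Nonempty ι] {x : ι → ℝ}
    (hx : ∀ i, 0 ≤ x i) :
    ∏ i, (1 - exp (-x i)) ≤ (1 - exp (-((∑ i, x i) / Fintype.card ι))) ^ Fintype.card ι := by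
  have hn : (Fintype.card ι : ℝ) ≠ 0 := Nat.cast_ne_zero.2 Fintype.card_ne_zero
  have hmean : (∑ i, (1 - exp (-x i))) / Fintype.card ι
      ≤ 1 - exp (-((∑ i, x i) / Fintype.card ι)) := by
    have jensen := exp_mean_le_mean_exp fun i => -x i
    rw [sum_neg_distrib, neg_div] at jensen
    rw [sum_sub_distrib, sum_const, card_univ, nsmul_one, sub_div, div_self hn]
    linarith
  exact (prod_le_mean_pow fun i => one_sub_exp_neg_nonneg (hx i)).trans <| pow_le_pow_left₀
    (div_nonneg (sum_nonneg fun i _ => one_sub_exp_neg_nonneg (hx i)) (Nat.cast_nonneg _))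
    hmean _

lemma one_sub_prod_one_sub_le_sum {ι : Type*} (s : Finset ι) {a : ι → ℝ}
    (h0 : ∀ i ∈ s, 0 ≤ a i) (h1 : ∀ i ∈ s, a i ≤ 1) :
    1 - ∏ i ∈ s, (1 - a i) ≤ ∑ i ∈ s, a i := by
  induction s using Finset.cons_induction with
  | empty => simp
  | cons j s _ ih =>
    simp only [mem_cons, forall_eq_or_imp] at h0 h1
    have hP0 : 0 ≤ ∏ i ∈ s, (1 - a i) := prod_nonneg fun i hi => sub_nonneg.2 (h1.2 i hi)
    have hP1 : ∏ i ∈ s, (1 - a i) ≤ 1 :=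
      prod_le_one (fun i hi => sub_nonneg.2 (h1.2 i hi)) fun i hi => by linarith [h0.2 i hi]
    rw [prod_cons, sum_cons]
    nlinarith [ih h0.2 h1.2]

lemma expMeasure_Iic {ρ t : ℝ} (hρ : 0 < ρ) (ht : 0 ≤ t) :
    expMeasure ρ (Iic t) = ENNReal.ofReal (1 - exp (-(ρ * t))) := by
  have := isProbabilityMeasure_expMeasure hρ
  rw [← ofReal_cdf, cdf_expMeasure_eq hρ, if_pos ht]

lemma measure_pi_setOf_iSup_le {ι : Type*} [Fintype ι] [Nonempty ι] (μ : ι → Measure ℝ)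
    [∀ i, SigmaFinite (μ i)] (t : ℝ) :
    Measure.pi μ {x | ⨆ i, x i ≤ t} = ∏ i, μ i (Iic t) := by
  have hset : {x : ι → ℝ | ⨆ i, x i ≤ t} = univ.pi fun _ => Iic t := by
    ext x
    simp only [Set.mem_ofPred_eq, mem_univ_pi, Set.mem_Iic]
    exact ciSup_le_iff (finite_range x).bddAbove
  rw [hset, Measure.pi_pi]

section MaxOfExponentials

variable {ι : Type*} [Fintype ι] [Nonempty ι] {ρ : ι → ℝ}

lemma measure_pi_expMeasure_setOf_iSup_le (hρ : ∀ i, 0 < ρ i) {t : ℝ} (ht : 0 ≤ t) :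
    (Measure.pi fun i => expMeasure (ρ i)) {x | ⨆ i, x i ≤ t}
      = ENNReal.ofReal (∏ i, (1 - exp (-(ρ i * t)))) := by
  have := fun i => isProbabilityMeasure_expMeasure (hρ i)
  rw [measure_pi_setOf_iSup_le, ENNReal.ofReal_prod_of_nonneg
    fun i _ => one_sub_exp_neg_nonneg (mul_nonneg (hρ i).le ht)]
  exact prod_congr rfl fun i _ => expMeasure_Iic (hρ i) ht

lemma ae_nonneg_iSup_pi_expMeasure (hρ : ∀ i, 0 < ρ i) :
    ∀ᵐ x ∂(Measure.pi fun i => expMeasure (ρ i)), 0 ≤ ⨆ i, x i := by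
  refine ae_iff.2 (measure_mono_null (t := {x | ⨆ i, x i ≤ 0})
    (fun x hx => (not_le.1 hx).le) ?_)
  rw [measure_pi_expMeasure_setOf_iSup_le hρ le_rfl]
  simp

lemma measure_pi_expMeasure_setOf_lt_iSup (hρ : ∀ i, 0 < ρ i) {t : ℝ} (ht : 0 ≤ t) :
    (Measure.pi fun i => expMeasure (ρ i)) {x | t < ⨆ i, x i}
      = ENNReal.ofReal (1 - ∏ i, (1 - exp (-(ρ i * t)))) := by
  have := fun i => isProbabilityMeasure_expMeasure (hρ i)
  have hcompl : {x : ι → ℝ | t < ⨆ i, x i} = {x | ⨆ i, x i ≤ t}ᶜ := by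
    ext x
    simp
  have hmeas : MeasurableSet {x : ι → ℝ | ⨆ i, x i ≤ t} :=
    measurableSet_le (Measurable.iSup measurable_pi_apply) measurable_const
  rw [hcompl, prob_compl_eq_one_sub hmeas, measure_pi_expMeasure_setOf_iSup_le hρ ht,
    ENNReal.ofReal_sub _ (prod_nonneg fun i _ => one_sub_exp_neg_nonneg (mul_nonneg (hρ i).le ht)),
    ENNReal.ofReal_one]

lemma lintegral_iSup_pi_expMeasure (hρ : ∀ i, 0 < ρ i) :
    ∫⁻ x, ENNReal.ofReal (⨆ i, x i) ∂(Measure.pi fun i => expMeasure (ρ i))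
      = ∫⁻ t in Ioi 0, ENNReal.ofReal (1 - ∏ i, (1 - exp (-(ρ i * t)))) := by
  rw [lintegral_eq_lintegral_meas_lt _ (ae_nonneg_iSup_pi_expMeasure hρ)
    (Measurable.iSup measurable_pi_apply).aemeasurable]
  exact setLIntegral_congr_fun measurableSet_Ioi fun t ht =>
    measure_pi_expMeasure_setOf_lt_iSup hρ (le_of_lt ht)

lemma lintegral_iSup_pi_expMeasure_lt_top (hρ : ∀ i, 0 < ρ i) :
    ∫⁻ x, ENNReal.ofReal (⨆ i, x i) ∂(Measure.pi fun i => expMeasure (ρ i)) < ⊤ := by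
  have hint : IntegrableOn (fun t => ∑ i, exp (-ρ i * t)) (Ioi 0) :=
    integrable_finsetSum _ fun i _ => exp_neg_integrableOn_Ioi 0 (hρ i)
  rw [lintegral_iSup_pi_expMeasure hρ]
  refine lt_of_le_of_lt (setLIntegral_mono' measurableSet_Ioi fun t ht =>
    ENNReal.ofReal_le_ofReal ?_) hint.setLIntegral_lt_top
  simpa only [neg_mul, sub_sub_cancel] using one_sub_prod_one_sub_le_sum univ
    (a := fun i => exp (-(ρ i * t))) (fun i _ => (exp_pos _).le)
    fun i _ => exp_le_one_iff.2 (neg_nonpos.2 (mul_nonneg (hρ i).le (le_of_lt ht)))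

theorem lintegral_iSup_pi_expMeasure_mean_le (hρ : ∀ i, 0 < ρ i) :
    ∫⁻ x, ENNReal.ofReal (⨆ i, x i)
        ∂(Measure.pi fun _ : ι => expMeasure ((∑ i, ρ i) / Fintype.card ι))
      ≤ ∫⁻ x, ENNReal.ofReal (⨆ i, x i) ∂(Measure.pi fun i => expMeasure (ρ i)) := by
  have hmean : 0 < (∑ i, ρ i) / Fintype.card ι :=
    div_pos (sum_pos (fun i _ => hρ i) univ_nonempty) (Nat.cast_pos.2 Fintype.card_pos)
  rw [lintegral_iSup_pi_expMeasure fun _ => hmean, lintegral_iSup_pi_expMeasure hρ]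
  refine setLIntegral_mono' measurableSet_Ioi fun t ht =>
    ENNReal.ofReal_le_ofReal (sub_le_sub_left ?_ 1)
  have key := prod_one_sub_exp_neg_le (x := fun i => ρ i * t) fun i => mul_nonneg (hρ i).le ht.le
  beta_reduce at key
  rw [prod_const, card_univ, div_mul_eq_mul_div]
  rwa [← sum_mul] at key

theorem integral_iSup_pi_expMeasure_mean_le (hρ : ∀ i, 0 < ρ i) :
    ∫ x, (⨆ i, x i) ∂(Measure.pi fun _ : ι => expMeasure ((∑ i, ρ i) / Fintype.card ι))
      ≤ ∫ x, (⨆ i, x i) ∂(Measure.pi fun i => expMeasure (ρ i)) := by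
  have hmean : 0 < (∑ i, ρ i) / Fintype.card ι :=
    div_pos (sum_pos (fun i _ => hρ i) univ_nonempty) (Nat.cast_pos.2 Fintype.card_pos)
  have hmeas : Measurable fun x : ι → ℝ => ⨆ i, x i := Measurable.iSup measurable_pi_apply
  rw [integral_eq_lintegral_of_nonneg_ae (ae_nonneg_iSup_pi_expMeasure fun _ => hmean)
      hmeas.aestronglyMeasurable,
    integral_eq_lintegral_of_nonneg_ae (ae_nonneg_iSup_pi_expMeasure hρ)
      hmeas.aestronglyMeasurable]
  exact ENNReal.toReal_mono (lintegral_iSup_pi_expMeasure_lt_top hρ).ne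
    (lintegral_iSup_pi_expMeasure_mean_le hρ)

end MaxOfExponentials

/-- Theorem 1: among all assignments of `N` workers to `B` non-overlapping batches
(`r i` workers host batch `i`, `∑ i, r i = N`, all entries positive), the balanced
assignment with every entry `N / B` achieves the minimum expected overall service
time, i.e. the minimum expectation of the maximum of the `B` independent exponential
batch recovery times with rates `λ ⬝ r i`. -/
theorem balanced_assignment_minimizes_expected_service_time (B : ℕ) (hB : 1 ≤ B)
    (lam N : ℝ) (hlam : 0 < lam) (r : Fin B → ℝ)
    (hr : ∀ i, 0 < r i) (hsum : ∑ i, r i = N) :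
    ∫ x, (⨆ i, x i) ∂(Measure.pi fun _ : Fin B => expMeasure (lam * (N / B)))
      ≤ ∫ x, (⨆ i, x i) ∂(Measure.pi fun i => expMeasure (lam * r i)) := by
  have : Nonempty (Fin B) := Fin.pos_iff_nonempty.mp hB
  have hmean : lam * (N / B) = (∑ i, lam * r i) / Fintype.card (Fin B) := by
    rw [← mul_sum, hsum, Fintype.card_fin, mul_div_assoc]
  rw [hmean]
  exact integral_iSup_pi_expMeasure_mean_le fun i => mul_pos hlam (hr i)
end

section
/- Let X₂, X₃, X₄, X₅, X₆ be i.i.d. exponential random variables with rate λ > 0 (formally, coordinates of the product on (Fin 5 → ℝ) of five copies of the exponential distribution with rate λ). Define the overall result generating times T_a = min( max(X₃, X₅), max(X₂, X₄, X₆) ) for the cyclic batching policy (a) and T_b = min( max(X₃, min(X₅, X₆)), max(max(X₂, X₄), min(X₅, X₆)) ) for the partially overlapping batching policy (b). Then E[T_b] < E[T_a]. -/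
open MeasureTheory ProbabilityTheory

/-!
Policy (b) is never slower than policy (a): its first branch `max X₃ (min X₅ X₆)` is at most
`max X₃ X₅`, and its second branch `max (max X₂ X₄) (min X₅ X₆)` is at most `max X₂ X₄ X₆`.
It is strictly faster as soon as `max X₃ X₆ < min X₂ X₅`, since then (b) finishes by
`max X₃ X₆` while (a) has to wait for `X₅` or `X₂`; this event contains a box of positive
probability. Both times are integrable because exponential variables have a finite mean.
-/

open Set

theorem MeasureTheory.integral_lt_integral_of_ae_le_of_measure_setOf_lt_ne_zero
    {α : Type*} [MeasurableSpace α] {μ : Measure α} {f g : α → ℝ}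
    (hf : Integrable f μ) (hg : Integrable g μ) (hle : f ≤ᵐ[μ] g)
    (hlt : μ {x | f x < g x} ≠ 0) :
    ∫ x, f x ∂μ < ∫ x, g x ∂μ := by
  rw [← sub_pos, ← integral_sub hg hf,
    integral_pos_iff_support_of_nonneg_ae (hle.mono fun _ => sub_nonneg.2) (hg.sub hf)]
  exact pos_iff_ne_zero.2 (mt (measure_mono_null fun _ hx => (sub_pos.2 hx).ne') hlt)

theorem MeasureTheory.Measure.pi_univ_pi_pos {ι : Type*} [Fintype ι] {α : ι → Type*}
    [∀ i, MeasurableSpace (α i)] {μ : ∀ i, Measure (α i)} [∀ i, SigmaFinite (μ i)]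
    {s : ∀ i, Set (α i)} (h : ∀ i, 0 < μ i (s i)) :
    0 < Measure.pi μ (univ.pi s) := by
  rw [Measure.pi_pi]
  exact CanonicallyOrderedAdd.prod_pos.2 fun i _ => h i

namespace ProbabilityTheory

open Real

theorem integrable_id_gammaMeasure {a r : ℝ} (ha : 0 < a) (hr : 0 < r) :
    Integrable id (gammaMeasure a r) := by
  have hpdf : Measurable (gammaPDF a r) := (measurable_gammaPDFReal a r).ennreal_ofReal
  rw [gammaMeasure, integrable_withDensity_iff hpdf (ae_of_all _ fun _ => ENNReal.ofReal_lt_top)]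
  have hmoment : IntegrableOn (fun x : ℝ => x ^ a * exp (-r * x ^ (1 : ℝ))) (Ioi 0) :=
    integrableOn_rpow_mul_exp_neg_mul_rpow (by linarith) one_pos hr
  refine ((integrable_indicator_iff measurableSet_Ioi).2
    (hmoment.const_mul (r ^ a / Gamma a))).congr (ae_of_all _ fun x => ?_)
  dsimp only [id]
  rcases lt_trichotomy x 0 with hx | rfl | hx
  · rw [indicator_of_notMem (notMem_Ioi.2 hx.le), gammaPDF_of_neg hx]
    simp
  · simp
  · rw [indicator_of_mem (mem_Ioi.2 hx), gammaPDF_of_nonneg hx.le,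
      ENNReal.toReal_ofReal (by positivity), rpow_one, rpow_sub_one hx.ne']
    field_simp

theorem gammaMeasure_Ioo_pos {a r c d : ℝ} (ha : 0 < a) (hr : 0 < r) (hc : 0 ≤ c)
    (hcd : c < d) : 0 < gammaMeasure a r (Ioo c d) := by
  have hpdf : Measurable (gammaPDF a r) := (measurable_gammaPDFReal a r).ennreal_ofReal
  rw [pos_iff_ne_zero, gammaMeasure, Ne, withDensity_apply_eq_zero' hpdf.aemeasurable,
    inter_eq_self_of_subset_right fun x hx => ?_]
  · simp [hcd]
  · simpa [gammaPDF] using gammaPDFReal_pos ha hr (hc.trans_lt hx.1)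

end ProbabilityTheory

section SixWorkers

variable {α : Type*} [LinearOrder α]

/-- `x 0, …, x 4` stand for the service times `X₂, …, X₆` of the paper. -/
def cyclicTime (x : Fin 5 → α) : α :=
  min (max (x 1) (x 3)) (max (x 0) (max (x 2) (x 4)))

def overlappingTime (x : Fin 5 → α) : α :=
  min (max (x 1) (min (x 3) (x 4))) (max (max (x 0) (x 2)) (min (x 3) (x 4)))

theorem overlappingTime_le_cyclicTime (x : Fin 5 → α) : overlappingTime x ≤ cyclicTime x := by
  simp only [overlappingTime, cyclicTime, le_min_iff, min_le_iff, max_le_iff, le_max_iff]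
  grind

theorem overlappingTime_lt_cyclicTime {x : Fin 5 → α} (h : max (x 1) (x 4) < min (x 0) (x 3)) :
    overlappingTime x < cyclicTime x := by
  simp only [overlappingTime, cyclicTime, lt_min_iff, min_lt_iff, max_lt_iff, lt_max_iff] at h ⊢
  grind

theorem integrable_cyclicTime {μ : Measure (Fin 5 → ℝ)}
    (h : ∀ i, Integrable (fun x : Fin 5 → ℝ => x i) μ) : Integrable cyclicTime μ :=
  ((h 1).sup (h 3)).inf ((h 0).sup ((h 2).sup (h 4)))

theorem integrable_overlappingTime {μ : Measure (Fin 5 → ℝ)}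
    (h : ∀ i, Integrable (fun x : Fin 5 → ℝ => x i) μ) : Integrable overlappingTime μ :=
  ((h 1).sup ((h 3).inf (h 4))).inf (((h 0).sup (h 2)).sup ((h 3).inf (h 4)))

end SixWorkers

/-- Six-worker example: with `X₂, …, X₆` i.i.d. exponential with rate `λ > 0`
(coordinates `x 0, …, x 4`), the expected overall result generating time of the partially
overlapping batching policy (b), `T_b = min(max(X₃, min(X₅,X₆)), max(max(X₂,X₄), min(X₅,X₆)))`,
is strictly smaller than that of the cyclic batching policy (a),
`T_a = min(max(X₃,X₅), max(X₂,X₄,X₆))`. -/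
theorem overlapping_beats_cyclic (lam : ℝ) (hlam : 0 < lam) :
    ∫ x : Fin 5 → ℝ,
        min (max (x 1) (min (x 3) (x 4))) (max (max (x 0) (x 2)) (min (x 3) (x 4)))
        ∂(Measure.pi fun _ : Fin 5 => expMeasure lam)
      < ∫ x : Fin 5 → ℝ,
        min (max (x 1) (x 3)) (max (x 0) (max (x 2) (x 4)))
        ∂(Measure.pi fun _ : Fin 5 => expMeasure lam) := by
  have := isProbabilityMeasure_expMeasure hlam
  have hcoord : ∀ i, Integrable (fun x : Fin 5 → ℝ => x i)
      (Measure.pi fun _ : Fin 5 => expMeasure lam) :=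
    fun _ => integrable_eval (integrable_id_gammaMeasure one_pos hlam)
  refine integral_lt_integral_of_ae_le_of_measure_setOf_lt_ne_zero
    (integrable_overlappingTime hcoord) (integrable_cyclicTime hcoord)
    (ae_of_all _ overlappingTime_le_cyclicTime) ?_
  let c : Fin 5 → ℝ := ![2, 0, 0, 2, 0]
  have hbox : univ.pi (fun i => Ioo (c i) (c i + 1)) ⊆ {x | overlappingTime x < cyclicTime x} := by
    intro x hx
    obtain ⟨h0, -⟩ := hx 0 (mem_univ _)
    obtain ⟨-, h1⟩ := hx 1 (mem_univ _)
    obtain ⟨h3, -⟩ := hx 3 (mem_univ _)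
    obtain ⟨-, h4⟩ := hx 4 (mem_univ _)
    simp only [c, Matrix.cons_val] at h0 h1 h3 h4
    norm_num at h0 h1 h3 h4
    exact overlappingTime_lt_cyclicTime (x := x) (max_lt (lt_min (by linarith) (by linarith))
      (lt_min (by linarith) (by linarith)))
  have hfactor : ∀ i, 0 < expMeasure lam (Ioo (c i) (c i + 1)) := fun i =>
    gammaMeasure_Ioo_pos one_pos hlam (by fin_cases i <;> norm_num [c]) (lt_add_one (c i))
  exact ((Measure.pi_univ_pi_pos hfactor).trans_le (measure_mono hbox)).ne'
end

section
/- Let W, X, Y be i.i.d. exponential random variables with rate λ > 0 (formally, coordinates of the product on (Fin 3 → ℝ) of three copies of the exponential distribution with rate λ). Then E[min(X, Y)] < E[min(X, max(W, Y))]. -/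
/-!
Pointwise `min X Y ≤ min X (max W Y)`, with strict inequality on the event `{Y < W, Y < X}`, which
has positive probability since the exponential law charges every set of positive Lebesgue
measure in `[0, ∞)`. Both sides are integrable because the exponential law has a finite mean.
-/

open MeasureTheory ProbabilityTheory Set Real

namespace ProbabilityTheory

variable {r : ℝ}

lemma measurable_exponentialPDF (r : ℝ) : Measurable (exponentialPDF r) :=
  (measurable_exponentialPDFReal r).ennreal_ofReal

lemma expMeasure_eq_withDensity (r : ℝ) :
    expMeasure r = volume.withDensity (exponentialPDF r) := rfl

lemma expMeasure_eq_zero_iff (hr : 0 < r) {s : Set ℝ} :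
    expMeasure r s = 0 ↔ volume (Ici 0 ∩ s) = 0 := by
  have hsupport : {x | exponentialPDF r x ≠ 0} = Ici 0 := by
    ext x
    rcases lt_or_ge x 0 with hx | hx
    · simp [exponentialPDF_of_neg hx, hx]
    · simp only [exponentialPDF_of_nonneg hx, mem_ofPred_eq, ne_eq, ENNReal.ofReal_eq_zero,
        not_le, mem_Ici, hx, iff_true]
      positivity
  rw [expMeasure_eq_withDensity, withDensity_apply_eq_zero (measurable_exponentialPDF r),
    hsupport]

lemma integrable_id_expMeasure (hr : 0 < r) : Integrable id (expMeasure r) := by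
  rw [expMeasure_eq_withDensity, integrable_withDensity_iff (measurable_exponentialPDF r)
    (.of_forall fun _ => ENNReal.ofReal_lt_top)]
  have hmoment : IntegrableOn (fun x => x * exp (-(r * x))) (Ici 0) := by
    rw [integrableOn_Ici_iff_integrableOn_Ioi]
    simpa [neg_mul] using
      integrableOn_rpow_mul_exp_neg_mul_rpow (s := 1) (p := 1) (by norm_num) one_pos hr
  have hdensity : (fun x => id x * (exponentialPDF r x).toReal) =
      (Ici 0).indicator fun x => r * (x * exp (-(r * x))) := by
    ext x
    rcases lt_or_ge x 0 with hx | hx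
    · simp [exponentialPDF_of_neg hx, hx]
    · rw [exponentialPDF_of_nonneg hx, indicator_of_mem (mem_Ici.2 hx),
        ENNReal.toReal_ofReal (by positivity), id]
      ring
  rw [hdensity, integrable_indicator_iff measurableSet_Ici]
  exact hmoment.const_mul r

end ProbabilityTheory

lemma min_lt_min_max_of_lt_of_lt {α : Type*} [LinearOrder α] {a b c : α} (ha : c < a)
    (hb : c < b) : min b c < min b (max a c) := by
  rw [min_eq_right hb.le]
  exact lt_min hb (lt_max_of_lt_left ha)

/-- For i.i.d. exponential random variables `W, X, Y` with rate `λ > 0` (coordinates of the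
product of three exponential distributions), `E[min(X, Y)] < E[min(X, max(W, Y))]`. -/
theorem exp_min_lt_min_max (lam : ℝ) (hlam : 0 < lam) :
    ∫ x : Fin 3 → ℝ, min (x 1) (x 2)
        ∂(Measure.pi fun _ : Fin 3 => expMeasure lam)
      < ∫ x : Fin 3 → ℝ, min (x 1) (max (x 0) (x 2))
        ∂(Measure.pi fun _ : Fin 3 => expMeasure lam) := by
  have := isProbabilityMeasure_expMeasure hlam
  set P := Measure.pi fun _ : Fin 3 => expMeasure lam
  have hcoord (i : Fin 3) : Integrable (fun x : Fin 3 → ℝ => x i) P :=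
    integrable_eval (integrable_id_expMeasure hlam)
  have hf : Integrable (fun x : Fin 3 → ℝ => min (x 1) (x 2)) P := (hcoord 1).inf (hcoord 2)
  have hg : Integrable (fun x : Fin 3 → ℝ => min (x 1) (max (x 0) (x 2))) P :=
    (hcoord 1).inf ((hcoord 0).sup (hcoord 2))
  rw [← sub_pos, ← integral_sub hg hf, integral_pos_iff_support_of_nonneg
    (fun x => sub_nonneg.2 (min_le_min_left _ (le_max_right _ _))) (hg.sub hf)]
  have hbox : Set.pi univ ![Ici 1, Ici 1, Iio 1] ⊆
      Function.support fun x : Fin 3 → ℝ => min (x 1) (max (x 0) (x 2)) - min (x 1) (x 2) :=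
    fun x hx => sub_ne_zero.2 <| ne_of_gt <| min_lt_min_max_of_lt_of_lt
      ((hx 2 trivial).trans_le (hx 0 trivial)) ((hx 2 trivial).trans_le (hx 1 trivial))
  refine (measure_mono hbox).trans_lt' ?_
  simp [P, Measure.pi_pi, Fin.prod_univ_three, pos_iff_ne_zero, expMeasure_eq_zero_iff hlam,
    Ici_inter_Iio]
end
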